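/- For every quaternion w ∈ H with tr(w) = 0 (purely imaginary) and every t ∈ R, the exponential e^{tw} is a unit quaternion (n(e^{tw}) = 1), and the set {e^{v} : v ∈ Im(H), n(v) < π²} equals the set of unit quaternions different from -1. -/

import Mathlib

/-!
An imaginary quaternion `v` satisfies `v ^ 2 = -‖v‖ ^ 2`, so the exponential series gives
`exp v = cos ‖v‖ + (sin ‖v‖ / ‖v‖) • v`: a unit quaternion with real part `cos ‖v‖`, which is
`-1` for `‖v‖ ∈ [0, π]` only at `‖v‖ = π`. Conversely a unit quaternion `q ≠ -1` is the exponential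
of the imaginary quaternion of length `arccos q.re ∈ [0, π)` pointing along `q.im`.
-/

noncomputable section

open Quaternion

namespace Quaternion

open NormedSpace

variable {q : ℍ[ℝ]}

theorem self_add_star_eq_zero_iff : q + star q = 0 ↔ q.re = 0 := by
  rw [self_add_star', ← coe_zero, coe_inj]
  simp

theorem normSq_eq_re_sq_add_norm_im_sq (q : ℍ[ℝ]) : normSq q = q.re ^ 2 + ‖q.im‖ ^ 2 := by
  rw [sq ‖q.im‖, ← normSq_eq_norm_mul_self, normSq_def', normSq_def', re_im, imI_im, imJ_im,
    imK_im]
  ring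

theorem normSq_lt_sq_iff_norm_lt {r : ℝ} (hr : 0 ≤ r) : normSq q < r ^ 2 ↔ ‖q‖ < r := by
  rw [normSq_eq_norm_mul_self, ← sq]
  exact sq_lt_sq₀ (norm_nonneg q) hr

theorem normSq_exp_of_re_eq_zero (hq : q.re = 0) : normSq (exp q) = 1 := by
  rw [normSq_exp, hq, exp_zero, one_pow]

theorem re_exp_of_re_eq_zero (hq : q.re = 0) : (exp q).re = Real.cos ‖q‖ := by
  simp [re_exp, hq]

theorem exp_ne_neg_one_of_norm_lt_pi (hq : q.re = 0) (hlt : ‖q‖ < Real.pi) : exp q ≠ -1 := by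
  intro h
  have hcos : Real.cos Real.pi < Real.cos ‖q‖ :=
    Real.cos_lt_cos_of_nonneg_of_le_pi (norm_nonneg q) le_rfl hlt
  rw [Real.cos_pi, ← re_exp_of_re_eq_zero hq, h] at hcos
  simp at hcos

theorem norm_im_eq_sin_arccos_re (h : normSq q = 1) : ‖q.im‖ = Real.sin (Real.arccos q.re) := by
  have hsplit := normSq_eq_re_sq_add_norm_im_sq q
  rw [Real.sin_arccos, show 1 - q.re ^ 2 = ‖q.im‖ ^ 2 by linarith, Real.sqrt_sq (norm_nonneg _)]

theorem abs_re_le_one_of_normSq_eq_one (h : normSq q = 1) : |q.re| ≤ 1 := by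
  have hsplit := normSq_eq_re_sq_add_norm_im_sq q
  rw [← sq_le_one_iff_abs_le_one]
  nlinarith [sq_nonneg ‖q.im‖]

theorem neg_one_lt_re_of_normSq_eq_one (h : normSq q = 1) (hne : q ≠ -1) : -1 < q.re := by
  rw [normSq_eq_re_sq_add_norm_im_sq] at h
  by_contra! hle
  have hre : q.re = -1 := by nlinarith [sq_nonneg ‖q.im‖]
  have him : q.im = 0 := by
    rw [← norm_eq_zero]
    nlinarith [norm_nonneg q.im]
  exact hne (by rw [← q.re_add_im, hre, him]; simp)

/-- When `q.im = 0` the division by `‖q.im‖ = 0` makes this `0`, the right value for `q = 1`. -/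
def unitLog (q : ℍ[ℝ]) : ℍ[ℝ] := (Real.arccos q.re / ‖q.im‖) • q.im

theorem re_unitLog (q : ℍ[ℝ]) : (unitLog q).re = 0 := by
  simp [unitLog]

theorem norm_unitLog_of_im_ne_zero (h : q.im ≠ 0) : ‖unitLog q‖ = Real.arccos q.re := by
  rw [unitLog, norm_smul, norm_div, norm_norm, Real.norm_of_nonneg (Real.arccos_nonneg _),
    div_mul_cancel₀ _ (norm_ne_zero_iff.2 h)]

theorem norm_unitLog_le (q : ℍ[ℝ]) : ‖unitLog q‖ ≤ Real.arccos q.re := by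
  rcases eq_or_ne q.im 0 with h | h
  · simp [unitLog, h, Real.arccos_nonneg]
  · exact (norm_unitLog_of_im_ne_zero h).le

theorem exp_unitLog (h : normSq q = 1) (hne : q ≠ -1) : exp (unitLog q) = q := by
  have hre := neg_one_lt_re_of_normSq_eq_one h hne
  rcases eq_or_ne q.im 0 with him | him
  · have hre1 : q.re = 1 := by
      rw [normSq_eq_re_sq_add_norm_im_sq, him, norm_zero] at h
      nlinarith
    rw [← q.re_add_im, hre1, him]
    simp [unitLog]
  · have hsin := norm_im_eq_sin_arccos_re h
    have hθ : Real.arccos q.re ≠ 0 := fun h0 => by simp [h0, him] at hsin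
    rw [exp_of_re_eq_zero _ (re_unitLog q), norm_unitLog_of_im_ne_zero him,
      Real.cos_arccos hre.le (abs_le.1 (abs_re_le_one_of_normSq_eq_one h)).2, ← hsin, unitLog,
      smul_smul, div_mul_div_cancel₀ hθ, div_self (norm_ne_zero_iff.2 him), one_smul, q.re_add_im]

end Quaternion

theorem quaternion_exp_imaginary_unit_sphere :
    (∀ w : Quaternion ℝ, w + star w = 0 → ∀ t : ℝ,
      normSq (NormedSpace.exp (t • w)) = 1) ∧
    {x : Quaternion ℝ | ∃ v : Quaternion ℝ,
        v + star v = 0 ∧ normSq v < Real.pi ^ 2 ∧ x = NormedSpace.exp v}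
      = {x : Quaternion ℝ | normSq x = 1 ∧ x ≠ -1} := by
  refine ⟨fun w hw t => ?_, Set.ext fun x => ⟨?_, ?_⟩⟩
  · apply normSq_exp_of_re_eq_zero
    rw [re_smul, self_add_star_eq_zero_iff.1 hw, smul_zero]
  · rintro ⟨v, hv, hlt, rfl⟩
    rw [self_add_star_eq_zero_iff] at hv
    rw [normSq_lt_sq_iff_norm_lt Real.pi_pos.le] at hlt
    exact ⟨normSq_exp_of_re_eq_zero hv, exp_ne_neg_one_of_norm_lt_pi hv hlt⟩
  · rintro ⟨hx, hne⟩
    refine ⟨unitLog x, self_add_star_eq_zero_iff.2 (re_unitLog x), ?_, (exp_unitLog hx hne).symm⟩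
    rw [normSq_lt_sq_iff_norm_lt Real.pi_pos.le]
    exact (norm_unitLog_le x).trans_lt
      (Real.arccos_lt_pi.2 (neg_one_lt_re_of_normSq_eq_one hx hne))
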